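/- Let U be a set and 𝒟 a family of equivalence relations on U that is a sublattice of the lattice of all equivalence relations on U (closed under common refinement and finest common coarsening). Then the following are equivalent: (i) for all P₁, P₂, P ∈ 𝒟, P₁ ⊥ P₂ | P holds if and only if the finest common coarsening of (the common refinement of P₁ and P) and (the common refinement of P₂ and P) equals P; (ii) any two members P₁, P₂ of 𝒟 commute, i.e. σ_{P₁}(σ_{P₂}(X)) = σ_{P₂}(σ_{P₁}(X)) for every X ⊆ U. -/
import Mathlib


/-- Saturation of a set `X` with respect to an equivalence relation (setoid) `P`. -/
def saturate {U : Type*} (P : Setoid U) (X : Set U) : Set U :=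
  {u | ∃ u' ∈ X, P.r u u'}

/-- Conditional independence of equivalence relations (setoids) `P₁` and `P₂` given `P`. -/
def CondIndep {U : Type*} (P₁ P₂ P : Setoid U) : Prop :=
  ∀ u u', P.r u u' → ∃ v, P₁.r u v ∧ P.r u v ∧ P₂.r u' v

/-- Composition of two setoids as a relation. -/
def Comp {U : Type*} (P Q : Setoid U) (u u' : U) : Prop :=
  ∃ v, P.r u v ∧ Q.r v u'

lemma mem_saturate_saturate {U : Type*} (P Q : Setoid U) (X : Set U) (u : U) :
    u ∈ saturate P (saturate Q X) ↔ ∃ w ∈ X, Comp P Q u w := by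
  constructor
  · rintro ⟨v, ⟨w, hw, hQ⟩, hP⟩; exact ⟨w, hw, v, hP, hQ⟩
  · rintro ⟨w, hw, v, hP, hQ⟩; exact ⟨v, ⟨w, hw, hQ⟩, hP⟩

lemma saturate_comm_iff {U : Type*} (P Q : Setoid U) :
    (∀ X, saturate P (saturate Q X) = saturate Q (saturate P X)) ↔
    ∀ u u', Comp P Q u u' ↔ Comp Q P u u' := by
  constructor
  · intro h u u'
    have := Set.ext_iff.mp (h {u'}) u
    rw [mem_saturate_saturate, mem_saturate_saturate] at this
    simpa using this
  · intro h X
    ext u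
    rw [mem_saturate_saturate, mem_saturate_saturate]
    exact exists_congr fun w => and_congr_right fun _ => h u w

/-- In Mathlib's lattice of setoids (ordered by implication of relations),
`⊓` is the common refinement and `⊔` is the finest common coarsening.
For a family `𝒟` of equivalence relations on `U` closed under `⊓` and `⊔`:
conditional independence is characterised by `(P₁ ⊓ P) ⊔ (P₂ ⊓ P) = P`
for all members of `𝒟` iff the members of `𝒟` pairwise commute. -/
theorem commuting_iff_condIndep_characterisation {U : Type*} (𝒟 : Set (Setoid U))
    (hinf : ∀ P Q : Setoid U, P ∈ 𝒟 → Q ∈ 𝒟 → P ⊓ Q ∈ 𝒟)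
    (hsup : ∀ P Q : Setoid U, P ∈ 𝒟 → Q ∈ 𝒟 → P ⊔ Q ∈ 𝒟) :
    (∀ P₁ ∈ 𝒟, ∀ P₂ ∈ 𝒟, ∀ P ∈ 𝒟,
        CondIndep P₁ P₂ P ↔ (P₁ ⊓ P) ⊔ (P₂ ⊓ P) = P) ↔
    (∀ P₁ ∈ 𝒟, ∀ P₂ ∈ 𝒟, ∀ X : Set U,
        saturate P₁ (saturate P₂ X) = saturate P₂ (saturate P₁ X)) := by
  constructor
  · -- characterisation → commuting
    intro h P₁ h1 P₂ h2
    rw [saturate_comm_iff]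
    have hS : P₁ ⊔ P₂ ∈ 𝒟 := hsup P₁ P₂ h1 h2
    have e1 : P₁ ⊓ (P₁ ⊔ P₂) = P₁ := inf_eq_left.mpr le_sup_left
    have e2 : P₂ ⊓ (P₁ ⊔ P₂) = P₂ := inf_eq_left.mpr le_sup_right
    have key : CondIndep P₁ P₂ (P₁ ⊔ P₂) := by
      rw [h P₁ h1 P₂ h2 (P₁ ⊔ P₂) hS, e1, e2]
    have key' : CondIndep P₂ P₁ (P₁ ⊔ P₂) := by
      rw [h P₂ h2 P₁ h1 (P₁ ⊔ P₂) hS, e2, e1, sup_comm]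
    intro u u'
    constructor
    · rintro ⟨v, hv1, hv2⟩
      have hsupr : (P₁ ⊔ P₂).r u u' :=
        (P₁ ⊔ P₂).trans' (Setoid.le_def.mp le_sup_left hv1)
          (Setoid.le_def.mp le_sup_right hv2)
      obtain ⟨w, hw2, _, hw1⟩ := key' u u' hsupr
      exact ⟨w, hw2, P₁.symm' hw1⟩
    · rintro ⟨v, hv2, hv1⟩
      have hsupr : (P₁ ⊔ P₂).r u u' :=
        (P₁ ⊔ P₂).trans' (Setoid.le_def.mp le_sup_right hv2)
          (Setoid.le_def.mp le_sup_left hv1)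
      obtain ⟨w, hw1, _, hw2⟩ := key u u' hsupr
      exact ⟨w, hw1, P₂.symm' hw2⟩
  · -- commuting → characterisation
    intro hcomm P₁ h1 P₂ h2 P hP
    set Q₁ := P₁ ⊓ P with hQ₁
    set Q₂ := P₂ ⊓ P with hQ₂
    have hc : ∀ u u', Comp Q₁ Q₂ u u' ↔ Comp Q₂ Q₁ u u' :=
      (saturate_comm_iff Q₁ Q₂).mp (hcomm Q₁ (hinf _ _ h1 hP) Q₂ (hinf _ _ h2 hP))
    -- `Comp Q₁ Q₂` is an equivalence relation
    have Seqv : Equivalence (Comp Q₁ Q₂) := by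
      refine ⟨fun u => ⟨u, Q₁.refl' u, Q₂.refl' u⟩, ?_, ?_⟩
      · rintro u u' ⟨v, a, b⟩
        exact (hc u' u).mpr ⟨v, Q₂.symm' b, Q₁.symm' a⟩
      · rintro u v w ⟨a, ha1, ha2⟩ ⟨b, hb1, hb2⟩
        obtain ⟨c, hc1, hc2⟩ := (hc a b).mpr ⟨v, ha2, hb1⟩
        exact ⟨c, Q₁.trans' ha1 hc1, Q₂.trans' hc2 hb2⟩
    set S : Setoid U := ⟨Comp Q₁ Q₂, Seqv⟩ with hS
    have hSle : Q₁ ⊔ Q₂ ≤ S := by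
      refine sup_le ?_ ?_
      · intro u u' h; exact ⟨u', h, Q₂.refl' u'⟩
      · intro u u' h; exact ⟨u, Q₁.refl' u, h⟩
    constructor
    · intro hci
      refine le_antisymm (sup_le inf_le_right inf_le_right) ?_
      intro u u' h
      obtain ⟨v, hv1, hvp, hv2⟩ := hci u u' h
      have hq1 : Q₁.r u v := ⟨hv1, hvp⟩
      have hq2 : Q₂.r v u' := ⟨P₂.symm' hv2, P.trans' (P.symm' hvp) h⟩
      exact (Q₁ ⊔ Q₂).trans' (Setoid.le_def.mp le_sup_left hq1)
        (Setoid.le_def.mp le_sup_right hq2)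
    · intro heq u u' h
      have : S.r u u' := Setoid.le_def.mp hSle (heq ▸ h)
      obtain ⟨v, hq1, hq2⟩ := this
      exact ⟨v, hq1.1, hq1.2, P₂.symm' hq2.1⟩
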